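/- For all integers k ≥ 0 and s ≥ 1, setting μ = 16 + 2k + s, the following inequality of rational numbers holds: (7/8 − 3/2)² + (11/8 − 3/2)² + (13/8 − 3/2)² + (17/8 − 3/2)² + ∑_{u=1}^{2k+8} ((u + 2k + 9)/(2k+9) − 3/2)² + ∑_{v=1}^{s+4} ((2v + 2s + 7)/(2(s+4)) − 3/2)² ≤ (μ/12)·(17/8 − 7/8). -/

import Mathlib

/-!
Both families of spectrum numbers are equally spaced and symmetric about 3/2, so each sum is
the variance of a uniform distribution on `{1, …, N}`, rescaled: `∑ (i - (N+1)/2)² = N(N² - 1)/12`.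
With `d = 2k + 9` and `m = s + 4`, the inequality becomes, after clearing denominators,
`0 ≤ d m (d - 9) + d (m - 2)² + (d - 8) m`.
-/

open Finset

section CenteredSquares

variable {K : Type*} [Field K] [CharZero K]

theorem sum_Icc_sub_sq (c : K) (N : ℕ) :
    ∑ i ∈ Icc 1 N, ((i : K) - c) ^ 2
      = N * (N + 1) * (2 * N + 1) / 6 - c * N * (N + 1) + N * c ^ 2 := by
  induction N with
  | zero => simp
  | succ n ih =>
    rw [sum_Icc_succ_top (by omega), ih]
    push_cast
    ring

theorem sum_Icc_sub_half_sq (N : ℕ) :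
    ∑ i ∈ Icc 1 N, ((i : K) - (N + 1) / 2) ^ 2 = (N : K) * ((N : K) ^ 2 - 1) / 12 := by
  rw [sum_Icc_sub_sq]
  ring

theorem sum_Icc_sub_half_div_sq (N : ℕ) (a : K) :
    ∑ i ∈ Icc 1 N, (((i : K) - (N + 1) / 2) / a) ^ 2 = (N : K) * ((N : K) ^ 2 - 1) / (12 * a ^ 2) := by
  simp_rw [div_pow, ← sum_div, sum_Icc_sub_half_sq, div_div]

end CenteredSquares

theorem sq_deviation_sum_le {d m : ℚ} (hd : 9 ≤ d) (hm : 0 < m) :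
    13 / 16 + (d - 1) * ((d - 1) ^ 2 - 1) / (12 * d ^ 2) + m * (m ^ 2 - 1) / (12 * m ^ 2)
      ≤ (d + m + 3) / 12 * (5 / 4) := by
  have hd0 : 0 < d := by linarith
  have hdm : 0 < d * m := mul_pos hd0 hm
  rw [← sub_nonneg]
  have hdiff : (d + m + 3) / 12 * (5 / 4) - (13 / 16 + (d - 1) * ((d - 1) ^ 2 - 1) / (12 * d ^ 2)
      + m * (m ^ 2 - 1) / (12 * m ^ 2))
      = (d * m * (d - 9) + d * (m - 2) ^ 2 + (d - 8) * m) / (48 * d * m) := by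
    field_simp
    ring
  rw [hdiff]
  have hnum : 0 ≤ d * m * (d - 9) + d * (m - 2) ^ 2 + (d - 8) * m :=
    add_nonneg (add_nonneg (mul_nonneg hdm.le (by linarith)) (mul_nonneg hd0.le (sq_nonneg _)))
      (mul_nonneg (by linarith) hm.le)
  exact div_nonneg hnum (by positivity)

theorem stmt_7_general (k s : ℕ) :
    ((7/8 : ℚ) - 3/2) ^ 2 +
      ((11/8 : ℚ) - 3/2) ^ 2 +
      ((13/8 : ℚ) - 3/2) ^ 2 +
      ((17/8 : ℚ) - 3/2) ^ 2 +
      ∑ u ∈ Finset.Icc 1 (2 * k + 8), (((u : ℚ) + 2 * (k : ℚ) + 9) / (2 * (k : ℚ) + 9) - 3/2) ^ 2 +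
      ∑ v ∈ Finset.Icc 1 (s + 4), ((2 * (v : ℚ) + 2 * (s : ℚ) + 7) / (2 * ((s : ℚ) + 4)) - 3/2) ^ 2
    ≤ ((16 + 2 * (k : ℚ) + (s : ℚ)) / 12) * (17/8 - 7/8) := by
  have hm : (0 : ℚ) < s + 4 := by positivity
  have h₁ : ∑ u ∈ Icc 1 (2 * k + 8), (((u : ℚ) + 2 * k + 9) / (2 * k + 9) - 3/2) ^ 2
      = ((2 * k + 8 : ℕ) : ℚ) * (((2 * k + 8 : ℕ) : ℚ) ^ 2 - 1) / (12 * (2 * k + 9) ^ 2) := by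
    rw [← sum_Icc_sub_half_div_sq]
    refine sum_congr rfl fun u _ => ?_
    push_cast
    field_simp
    ring
  have h₂ : ∑ v ∈ Icc 1 (s + 4), ((2 * (v : ℚ) + 2 * s + 7) / (2 * (s + 4)) - 3/2) ^ 2
      = ((s + 4 : ℕ) : ℚ) * (((s + 4 : ℕ) : ℚ) ^ 2 - 1) / (12 * (s + 4) ^ 2) := by
    rw [← sum_Icc_sub_half_div_sq]
    refine sum_congr rfl fun v _ => ?_
    push_cast
    field_simp
    ring
  have hk : (9 : ℚ) ≤ 2 * k + 9 := by linarith [(k.cast_nonneg : (0 : ℚ) ≤ k)]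
  rw [h₁, h₂]
  push_cast
  convert sq_deviation_sum_le hk hm using 1 <;> ring

theorem stmt_7 (k s : ℕ) (hs : 1 ≤ s) :
    ((7/8 : ℚ) - 3/2) ^ 2 +
      ((11/8 : ℚ) - 3/2) ^ 2 +
      ((13/8 : ℚ) - 3/2) ^ 2 +
      ((17/8 : ℚ) - 3/2) ^ 2 +
      ∑ u ∈ Finset.Icc 1 (2 * k + 8), (((u : ℚ) + 2 * (k : ℚ) + 9) / (2 * (k : ℚ) + 9) - 3/2) ^ 2 +
      ∑ v ∈ Finset.Icc 1 (s + 4), ((2 * (v : ℚ) + 2 * (s : ℚ) + 7) / (2 * ((s : ℚ) + 4)) - 3/2) ^ 2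
    ≤ ((16 + 2 * (k : ℚ) + (s : ℚ)) / 12) * (17/8 - 7/8) :=
  stmt_7_general k s
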